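/- Let (H,K,A,C) be a Yetter-Drinfeld datum and M a generalized Yetter-Drinfeld module in _A YD^C(H,K). Then for any left H-module V, the map β_{V,M} : V ⊗ M → M ⊗ (C ⊗_H V), v ⊗ m ↦ m_{[0]} ⊗ (m_{[1]} ⊗_H v), is left A-linear, where A acts on V ⊗ M by a·(v ⊗ m) = a_{[-1]}·v ⊗ a_{[0]}m and on M ⊗ (C ⊗_H V) by a·(m ⊗ c ⊗_H v) = a_{[0]}m ⊗ (a_{[1]} ▷ c) ⊗_H v. -/

import Mathlib

/-!
Evaluated on `a ⊗ v ⊗ m`, the left side is `(a₍₀₎m)₍₀₎ ⊗ ((a₍₀₎m)₍₁₎ ⊗_H a₍₋₁₎v)`.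
Balancing moves `a₍₋₁₎` across `⊗_H`, so this is the image under `c ↦ c ⊗_H v` of the
left side `(a₍₀₎m)₍₀₎ ⊗ (a₍₀₎m)₍₁₎ ◁ a₍₋₁₎` of the Yetter-Drinfeld condition, while the
right side is the image of `a₍₀₎m₍₀₎ ⊗ a₍₁₎ ▷ m₍₁₎` under the same map.
-/

open TensorProduct Coalgebra

variable {k : Type} [CommRing k]

/-- The `H`-balancing submodule of `C ⊗ₖ U`, whose quotient is `C ⊗_H U`. -/
def balancer (H : Type) [Ring H] [Algebra k H]
    (C : Type) [AddCommGroup C] [Module k C] (actR : C ⊗[k] H →ₗ[k] C)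
    (U : Type) [AddCommGroup U] [Module k U] [Module H U] [IsScalarTower k H U] :
    Submodule k (C ⊗[k] U) :=
  Submodule.span k {x | ∃ (c : C) (h : H) (u : U), x = actR (c ⊗ₜ h) ⊗ₜ u - c ⊗ₜ (h • u)}

/-- The half-braid `β_{V,M} : V ⊗ M → M ⊗ (C ⊗ V)` at the level of `k`-modules,
`v ⊗ m ↦ m₍₀₎ ⊗ (m₍₁₎ ⊗ v)`. -/
noncomputable def betaRaw {C M : Type} [AddCommGroup C] [Module k C] [AddCommGroup M] [Module k M]
    (ρ : M →ₗ[k] M ⊗[k] C)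
    (V : Type) [AddCommGroup V] [Module k V] :
    V ⊗[k] M →ₗ[k] M ⊗[k] (C ⊗[k] V) :=
  (TensorProduct.assoc k M C V).toLinearMap ∘ₗ (LinearMap.rTensor V ρ) ∘ₗ
    (TensorProduct.comm k V M).toLinearMap

/-- The action of `H` on a left `H`-module as a `k`-linear map `H ⊗ₖ V → V`. -/
noncomputable def hAct (H : Type) [Ring H] [Algebra k H]
    (V : Type) [AddCommGroup V] [Module k V] [Module H V] [IsScalarTower k H V]
    [SMulCommClass k H V] : H ⊗[k] V →ₗ[k] V :=
  TensorProduct.lift (LinearMap.mk₂ k (fun h v => h • v)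
    (fun h h' v => add_smul h h' v) (fun c h v => smul_assoc c h v)
    (fun h v v' => smul_add h v v') (fun c h v => (smul_comm c h v).symm))

section HalfBraid

variable {H : Type} [Ring H] [Algebra k H]
  {K : Type} [AddCommGroup K] [Module k K]
  {A : Type} [AddCommGroup A] [Module k A]
  {C : Type} [AddCommGroup C] [Module k C] {actR : C ⊗[k] H →ₗ[k] C}
  {V : Type} [AddCommGroup V] [Module k V] [Module H V] [IsScalarTower k H V]
  {M : Type} [AddCommGroup M] [Module k M]

theorem assoc_tmul_eq_lTensor {P : Type} [AddCommGroup P] [Module k P] (x : M ⊗[k] C) (p : P) :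
    TensorProduct.assoc k M C P (x ⊗ₜ p) =
      LinearMap.lTensor M ((TensorProduct.mk k C P).flip p) x := by
  induction x using TensorProduct.induction_on with
  | zero => simp
  | add x y hx hy => simp only [add_tmul, map_add, hx, hy]
  | tmul m c => rfl

theorem betaRaw_tmul (ρ : M →ₗ[k] M ⊗[k] C) (v : V) (m : M) :
    betaRaw ρ V (v ⊗ₜ m) = LinearMap.lTensor M ((TensorProduct.mk k C V).flip v) (ρ m) :=
  assoc_tmul_eq_lTensor (ρ m) v

variable (actR V) in
noncomputable def balancedTmul (v : V) :
    C →ₗ[k] C ⊗[k] V ⧸ balancer H C actR V :=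
  (balancer H C actR V).mkQ ∘ₗ (TensorProduct.mk k C V).flip v

theorem balancedTmul_smul (h : H) (v : V) :
    balancedTmul actR V (h • v) =
      balancedTmul actR V v ∘ₗ actR ∘ₗ (TensorProduct.mk k C H).flip h := by
  ext c
  simp only [balancedTmul, LinearMap.comp_apply, LinearMap.flip_apply, TensorProduct.mk_apply,
    Submodule.mkQ_apply]
  refine ((Submodule.Quotient.eq _).2 ?_).symm
  exact Submodule.subset_span ⟨c, h, v, rfl⟩

theorem lTensor_mkQ_betaRaw_tmul (ρ : M →ₗ[k] M ⊗[k] C) (v : V) (m : M) :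
    LinearMap.lTensor M (balancer H C actR V).mkQ (betaRaw ρ V (v ⊗ₜ m)) =
      LinearMap.lTensor M (balancedTmul actR V v) (ρ m) := by
  rw [betaRaw_tmul, ← LinearMap.comp_apply, ← LinearMap.lTensor_comp]
  rfl

theorem hAct_tmul [SMulCommClass k H V] (h : H) (v : V) : hAct H V (h ⊗ₜ[k] v) = h • v := rfl

variable (actR) in
/-- `a ⊗ m ↦ (a₍₀₎m)₍₀₎ ⊗ (a₍₀₎m)₍₁₎ ◁ a₍₋₁₎` -/
noncomputable def ydLeft (ΔL : A →ₗ[k] H ⊗[k] A)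
    (μ : A ⊗[k] M →ₗ[k] M) (ρ : M →ₗ[k] M ⊗[k] C) : A ⊗[k] M →ₗ[k] M ⊗[k] C :=
  (LinearMap.lTensor M actR) ∘ₗ (TensorProduct.assoc k M C H).toLinearMap ∘ₗ
    (TensorProduct.comm k H (M ⊗[k] C)).toLinearMap ∘ₗ
    (LinearMap.lTensor H (ρ ∘ₗ μ)) ∘ₗ (TensorProduct.assoc k H A M).toLinearMap ∘ₗ
    (LinearMap.rTensor M ΔL)

/-- `a ⊗ m ↦ a₍₀₎m₍₀₎ ⊗ a₍₁₎ ▷ m₍₁₎` -/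
noncomputable def ydRight (ΔR : A →ₗ[k] A ⊗[k] K) (actL : K ⊗[k] C →ₗ[k] C)
    (μ : A ⊗[k] M →ₗ[k] M) (ρ : M →ₗ[k] M ⊗[k] C) : A ⊗[k] M →ₗ[k] M ⊗[k] C :=
  (TensorProduct.map μ actL) ∘ₗ (TensorProduct.tensorTensorTensorComm k A K M C).toLinearMap
    ∘ₗ (LinearMap.lTensor (A ⊗[k] K) ρ) ∘ₗ (LinearMap.rTensor M ΔR)

theorem lTensor_mkQ_betaRaw_leftAction [SMulCommClass k H V] (ΔL : A →ₗ[k] H ⊗[k] A)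
    (μ : A ⊗[k] M →ₗ[k] M) (ρ : M →ₗ[k] M ⊗[k] C) (a : A) (v : V) (m : M) :
    LinearMap.lTensor M (balancer H C actR V).mkQ (betaRaw ρ V (TensorProduct.map (hAct H V) μ
      (TensorProduct.tensorTensorTensorComm k H A V M (ΔL a ⊗ₜ (v ⊗ₜ m))))) =
      LinearMap.lTensor M (balancedTmul actR V v) (ydLeft actR ΔL μ ρ (a ⊗ₜ m)) := by
  simp only [ydLeft, LinearMap.comp_apply, LinearEquiv.coe_coe, LinearMap.rTensor_tmul]
  induction ΔL a with
  | zero => simp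
  | add x y hx hy => simp only [add_tmul, map_add, hx, hy]
  | tmul h a' =>
    simp only [TensorProduct.tensorTensorTensorComm_tmul, TensorProduct.map_tmul, hAct_tmul,
      TensorProduct.assoc_tmul, LinearMap.lTensor_tmul, LinearMap.comp_apply,
      TensorProduct.comm_tmul]
    rw [lTensor_mkQ_betaRaw_tmul, balancedTmul_smul, assoc_tmul_eq_lTensor]
    simp only [LinearMap.lTensor_comp, LinearMap.comp_apply]

theorem lTensor_flip_mk_ydRight (ΔR : A →ₗ[k] A ⊗[k] K) (actL : K ⊗[k] C →ₗ[k] C)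
    (μ : A ⊗[k] M →ₗ[k] M) (ρ : M →ₗ[k] M ⊗[k] C) (a : A) (v : V) (m : M) :
    LinearMap.lTensor M ((TensorProduct.mk k C V).flip v) (ydRight ΔR actL μ ρ (a ⊗ₜ m)) =
      TensorProduct.map μ
        ((LinearMap.rTensor V actL) ∘ₗ (TensorProduct.assoc k K C V).symm.toLinearMap)
        (TensorProduct.tensorTensorTensorComm k A K M (C ⊗[k] V)
          (ΔR a ⊗ₜ betaRaw ρ V (v ⊗ₜ m))) := by
  have naturality :
      LinearMap.lTensor M ((TensorProduct.mk k C V).flip v) ∘ₗ TensorProduct.map μ actL ∘ₗ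
        (TensorProduct.tensorTensorTensorComm k A K M C).toLinearMap =
      TensorProduct.map μ
        ((LinearMap.rTensor V actL) ∘ₗ (TensorProduct.assoc k K C V).symm.toLinearMap) ∘ₗ
        (TensorProduct.tensorTensorTensorComm k A K M (C ⊗[k] V)).toLinearMap ∘ₗ
        LinearMap.lTensor (A ⊗[k] K) (LinearMap.lTensor M ((TensorProduct.mk k C V).flip v)) := by
    ext
    rfl
  simp only [ydRight, betaRaw_tmul, LinearMap.comp_apply, LinearEquiv.coe_coe,
    LinearMap.rTensor_tmul, LinearMap.lTensor_tmul]
  exact LinearMap.congr_fun naturality (ΔR a ⊗ₜ ρ m)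

end HalfBraid

theorem genYD_halfBraid_A_linear_general
    {H : Type} [Ring H] [Bialgebra k H]
    {K : Type} [Ring K] [Bialgebra k K]
    {A : Type} [Ring A] [Algebra k A]
    {C : Type} [AddCommGroup C] [Module k C]
    {M : Type} [AddCommGroup M] [Module k M]
    (ΔL : A →ₗ[k] H ⊗[k] A) (ΔR : A →ₗ[k] A ⊗[k] K)
    (actL : K ⊗[k] C →ₗ[k] C) (actR : C ⊗[k] H →ₗ[k] C)
    (μ : A ⊗[k] M →ₗ[k] M) (ρ : M →ₗ[k] M ⊗[k] C)
    -- Yetter-Drinfeld compatibility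
    (hYD : (LinearMap.lTensor M actR) ∘ₗ (TensorProduct.assoc k M C H).toLinearMap ∘ₗ
        (TensorProduct.comm k H (M ⊗[k] C)).toLinearMap ∘ₗ
        (LinearMap.lTensor H (ρ ∘ₗ μ)) ∘ₗ (TensorProduct.assoc k H A M).toLinearMap ∘ₗ
        (LinearMap.rTensor M ΔL)
      = (TensorProduct.map μ actL) ∘ₗ (TensorProduct.tensorTensorTensorComm k A K M C).toLinearMap
          ∘ₗ (LinearMap.lTensor (A ⊗[k] K) ρ) ∘ₗ (LinearMap.rTensor M ΔR))
    (V : Type) [AddCommGroup V] [Module k V] [Module H V] [IsScalarTower k H V]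
    [SMulCommClass k H V] :
    (LinearMap.lTensor M (balancer H C actR V).mkQ) ∘ₗ (betaRaw ρ V) ∘ₗ
      -- the action of `A` on `V ⊗ M`
      ((TensorProduct.map (hAct H V) μ) ∘ₗ
        (TensorProduct.tensorTensorTensorComm k H A V M).toLinearMap ∘ₗ
        (LinearMap.rTensor (V ⊗[k] M) ΔL))
    = (LinearMap.lTensor M (balancer H C actR V).mkQ) ∘ₗ
      -- the action of `A` on `M ⊗ (C ⊗ V)`
      ((TensorProduct.map μ
          ((LinearMap.rTensor V actL) ∘ₗ (TensorProduct.assoc k K C V).symm.toLinearMap)) ∘ₗ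
        (TensorProduct.tensorTensorTensorComm k A K M (C ⊗[k] V)).toLinearMap ∘ₗ
        (LinearMap.rTensor (M ⊗[k] (C ⊗[k] V)) ΔR)) ∘ₗ
      (LinearMap.lTensor A (betaRaw ρ V)) := by
  refine TensorProduct.ext_threefold' fun a v m => ?_
  calc _ = LinearMap.lTensor M (balancedTmul actR V v) (ydLeft actR ΔL μ ρ (a ⊗ₜ m)) :=
        lTensor_mkQ_betaRaw_leftAction ΔL μ ρ a v m
    _ = LinearMap.lTensor M (balancedTmul actR V v) (ydRight ΔR actL μ ρ (a ⊗ₜ m)) := by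
        rw [show ydLeft actR ΔL μ ρ = ydRight ΔR actL μ ρ from hYD]
    _ = _ := by
        rw [balancedTmul, LinearMap.lTensor_comp, LinearMap.comp_apply, lTensor_flip_mk_ydRight]
        rfl

/-- For a generalized Yetter-Drinfeld module `M` over the YD datum `(H,K,A,C)` and a
left `H`-module `V`, the half-braid `β_{V,M} : V ⊗ M → M ⊗ (C ⊗_H V)`,
`v ⊗ m ↦ m₍₀₎ ⊗ (m₍₁₎ ⊗_H v)`, is left `A`-linear, where `A` acts on `V ⊗ M` by
`a·(v ⊗ m) = a₍₋₁₎·v ⊗ a₍₀₎m` and on `M ⊗ (C ⊗_H V)` by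
`a·(m ⊗ c ⊗_H v) = a₍₀₎m ⊗ (a₍₁₎ ▷ c) ⊗_H v`. -/
theorem genYD_halfBraid_A_linear
    {H : Type} [Ring H] [Bialgebra k H]
    {K : Type} [Ring K] [Bialgebra k K]
    {A : Type} [Ring A] [Algebra k A]
    {C : Type} [AddCommGroup C] [Module k C] [Coalgebra k C]
    {M : Type} [AddCommGroup M] [Module k M]
    (ΔL : A →ₗ[k] H ⊗[k] A) (ΔR : A →ₗ[k] A ⊗[k] K)
    (actL : K ⊗[k] C →ₗ[k] C) (actR : C ⊗[k] H →ₗ[k] C)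
    (μ : A ⊗[k] M →ₗ[k] M) (ρ : M →ₗ[k] M ⊗[k] C)
    -- `M` is a right `C`-comodule and a left `A`-module
    (hρcoassoc : (TensorProduct.assoc k M C C).toLinearMap ∘ₗ
        (LinearMap.rTensor C ρ) ∘ₗ ρ = (LinearMap.lTensor M (comul (R := k) (A := C))) ∘ₗ ρ)
    (hρcounit : (TensorProduct.rid k M).toLinearMap ∘ₗ
        (LinearMap.lTensor M (counit (R := k) (A := C))) ∘ₗ ρ = LinearMap.id)
    (hμone : ∀ m : M, μ (1 ⊗ₜ m) = m)
    (hμmul : ∀ (a b : A) (m : M), μ ((a * b) ⊗ₜ m) = μ (a ⊗ₜ μ (b ⊗ₜ m)))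
    -- Yetter-Drinfeld compatibility
    (hYD : (LinearMap.lTensor M actR) ∘ₗ (TensorProduct.assoc k M C H).toLinearMap ∘ₗ
        (TensorProduct.comm k H (M ⊗[k] C)).toLinearMap ∘ₗ
        (LinearMap.lTensor H (ρ ∘ₗ μ)) ∘ₗ (TensorProduct.assoc k H A M).toLinearMap ∘ₗ
        (LinearMap.rTensor M ΔL)
      = (TensorProduct.map μ actL) ∘ₗ (TensorProduct.tensorTensorTensorComm k A K M C).toLinearMap
          ∘ₗ (LinearMap.lTensor (A ⊗[k] K) ρ) ∘ₗ (LinearMap.rTensor M ΔR))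
    (V : Type) [AddCommGroup V] [Module k V] [Module H V] [IsScalarTower k H V]
    [SMulCommClass k H V] :
    (LinearMap.lTensor M (balancer H C actR V).mkQ) ∘ₗ (betaRaw ρ V) ∘ₗ
      -- the action of `A` on `V ⊗ M`
      ((TensorProduct.map (hAct H V) μ) ∘ₗ
        (TensorProduct.tensorTensorTensorComm k H A V M).toLinearMap ∘ₗ
        (LinearMap.rTensor (V ⊗[k] M) ΔL))
    = (LinearMap.lTensor M (balancer H C actR V).mkQ) ∘ₗ
      -- the action of `A` on `M ⊗ (C ⊗ V)`
      ((TensorProduct.map μ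
          ((LinearMap.rTensor V actL) ∘ₗ (TensorProduct.assoc k K C V).symm.toLinearMap)) ∘ₗ
        (TensorProduct.tensorTensorTensorComm k A K M (C ⊗[k] V)).toLinearMap ∘ₗ
        (LinearMap.rTensor (M ⊗[k] (C ⊗[k] V)) ΔR)) ∘ₗ
      (LinearMap.lTensor A (betaRaw ρ V)) :=
  genYD_halfBraid_A_linear_general ΔL ΔR actL actR μ ρ hYD V
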